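/- Suppose (U^n) solves the implicit upwind scheme for linear advection with λ > 0, and let η : ℝ → ℝ be convex and nonnegative. Fix n ∈ ℕ and assume that for each 0 ≤ k ≤ n+1 the sequence j ↦ η(U^k_j) is summable over ℤ. Then Σ_{j∈ℤ} η(U^{n+1}_j) ≤ Σ_{k=0}^{n} c^{n+1}_k Σ_{j∈ℤ} η(U^k_j). -/

import Mathlib

open scoped BigOperators

/-- The L1 coefficients `c^{n+1}_k` for the discrete Caputo derivative:
`c^{n+1}_0 = (n+1)^{1-α} - n^{1-α}` and, for `1 ≤ k ≤ n`,
`c^{n+1}_k = 2(n+1-k)^{1-α} - (n+2-k)^{1-α} - (n-k)^{1-α}`. -/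
noncomputable def caputoCoeff (α : ℝ) (n k : ℕ) : ℝ :=
  if k = 0 then ((n : ℝ) + 1) ^ (1 - α) - (n : ℝ) ^ (1 - α)
  else 2 * ((n : ℝ) + 1 - (k : ℝ)) ^ (1 - α) - ((n : ℝ) + 2 - (k : ℝ)) ^ (1 - α)
    - ((n : ℝ) - (k : ℝ)) ^ (1 - α)

/-- `U` solves the implicit upwind scheme for the linear advection equation
with flux `f(u) = a u`, `a > 0`, where `lam = a τ^α / (h Γ(2-α))`. -/
def SolvesImplicitAdvection (α lam : ℝ) (U : ℕ → ℤ → ℝ) : Prop :=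
  ∀ (n : ℕ) (j : ℤ),
    U (n + 1) j = (∑ k ∈ Finset.range (n + 1), caputoCoeff α n k * U k j)
      - lam * (U (n + 1) j - U (n + 1) (j - 1))

/-!
Dividing the scheme by `1 + λ` writes `U^{n+1}_j` as a convex combination of the memory term
`Σ_k c^{n+1}_k U^k_j` and of the upwind neighbour `U^{n+1}_{j-1}`, because the `c^{n+1}_k` are
nonnegative and sum to one. Jensen's inequality, applied twice, bounds `η(U^{n+1}_j)` by the same
combination of the `η`-values; summing over `j`, the neighbour term contributes again
`Σ_j η(U^{n+1}_j)` by shift invariance and can be absorbed into the left-hand side.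
-/

section CaputoCoeff

lemma caputoCoeff_succ (α : ℝ) (n i : ℕ) :
    caputoCoeff α n (i + 1) =
      (((n : ℝ) - (i + 1 : ℕ) + 1) ^ (1 - α) - ((n : ℝ) - (i + 1 : ℕ)) ^ (1 - α))
        - (((n : ℝ) - i + 1) ^ (1 - α) - ((n : ℝ) - i) ^ (1 - α)) := by
  simp only [caputoCoeff, Nat.succ_ne_zero, if_false]
  push_cast
  ring_nf

/-- The coefficients telescope: `c^{n+1}_{i+1}` is a difference of consecutive increments of
`x ↦ x^{1-α}`. -/
lemma sum_caputoCoeff {α : ℝ} (hα : α ≠ 1) (n : ℕ) :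
    ∑ k ∈ Finset.range (n + 1), caputoCoeff α n k = 1 := by
  rw [Finset.sum_range_succ', Finset.sum_congr rfl fun i _ => caputoCoeff_succ α n i,
    Finset.sum_range_sub (fun i : ℕ => ((n : ℝ) - i + 1) ^ (1 - α) - ((n : ℝ) - i) ^ (1 - α))]
  simp [caputoCoeff, Real.zero_rpow (sub_ne_zero.mpr hα.symm)]

/-- For `k ≥ 1`, `c^{n+1}_k ≥ 0` is midpoint concavity of `x ↦ x^{1-α}` at `n + 1 - k`. -/
lemma caputoCoeff_nonneg {α : ℝ} (hα0 : 0 ≤ α) (hα1 : α ≤ 1) {n k : ℕ} (hk : k ≤ n) :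
    0 ≤ caputoCoeff α n k := by
  have hβ0 : 0 ≤ 1 - α := by linarith
  rcases Nat.eq_zero_or_pos k with rfl | hk0
  · simp only [caputoCoeff, if_true, sub_nonneg]
    exact Real.rpow_le_rpow n.cast_nonneg (by linarith) hβ0
  · have hkn : (k : ℝ) ≤ n := Nat.cast_le.mpr hk
    have hk1 : (1 : ℝ) ≤ k := Nat.one_le_cast.mpr hk0
    have hmid := (Real.concaveOn_rpow hβ0 (by linarith)).2
      (show (n : ℝ) - k ∈ Set.Ici 0 by simp; linarith)
      (show (n : ℝ) + 2 - k ∈ Set.Ici 0 by simp; linarith)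
      (show (0 : ℝ) ≤ 1 / 2 by norm_num) (show (0 : ℝ) ≤ 1 / 2 by norm_num) (by norm_num)
    simp only [smul_eq_mul] at hmid
    rw [show 1 / 2 * ((n : ℝ) - k) + 1 / 2 * ((n : ℝ) + 2 - k) = (n : ℝ) + 1 - k by ring]
      at hmid
    simp only [caputoCoeff, hk0.ne', if_false]
    linarith

end CaputoCoeff

lemma tsum_le_tsum_of_le_mul_add_shift {f g : ℤ → ℝ} {μ : ℝ} (hμ : 0 < μ) (hf : Summable f)
    (hg : Summable g) (h : ∀ j, f j ≤ μ * g j + (1 - μ) * f (j - 1)) :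
    ∑' j, f j ≤ ∑' j, g j := by
  have hf_shift : Summable fun j => f (j - 1) := (Equiv.subRight (1 : ℤ)).summable_iff.mpr hf
  have hsum : ∑' j, f j ≤ μ * ∑' j, g j + (1 - μ) * ∑' j, f j := by
    calc ∑' j, f j ≤ ∑' j, (μ * g j + (1 - μ) * f (j - 1)) :=
          hf.tsum_le_tsum h ((hg.mul_left μ).add (hf_shift.mul_left _))
      _ = μ * ∑' j, g j + (1 - μ) * ∑' j, f j := by
          rw [(hg.mul_left μ).tsum_add (hf_shift.mul_left _), tsum_mul_left, tsum_mul_left,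
            show ∑' j, f (j - 1) = ∑' j, f j from (Equiv.subRight (1 : ℤ)).tsum_eq f]
  nlinarith

namespace SolvesImplicitAdvection

variable {α lam : ℝ} {U : ℕ → ℤ → ℝ}

lemma eq_convex_combination (hU : SolvesImplicitAdvection α lam U) (hlam : 1 + lam ≠ 0)
    (n : ℕ) (j : ℤ) :
    U (n + 1) j = (1 + lam)⁻¹ * ∑ k ∈ Finset.range (n + 1), caputoCoeff α n k * U k j
      + (1 - (1 + lam)⁻¹) * U (n + 1) (j - 1) := by
  have := hU n j
  field_simp
  linarith

lemma entropy_le_convex_combination (hU : SolvesImplicitAdvection α lam U) (hα0 : 0 ≤ α)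
    (hα1 : α < 1) (hlam : 0 ≤ lam) {η : ℝ → ℝ} (hη : ConvexOn ℝ Set.univ η) (n : ℕ) (j : ℤ) :
    η (U (n + 1) j)
      ≤ (1 + lam)⁻¹ * ∑ k ∈ Finset.range (n + 1), caputoCoeff α n k * η (U k j)
        + (1 - (1 + lam)⁻¹) * η (U (n + 1) (j - 1)) := by
  set μ := (1 + lam)⁻¹
  have hμ0 : 0 ≤ μ := by positivity
  have hμ1 : μ ≤ 1 := inv_le_one_of_one_le₀ (by linarith)
  have hjensen : η (∑ k ∈ Finset.range (n + 1), caputoCoeff α n k * U k j)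
      ≤ ∑ k ∈ Finset.range (n + 1), caputoCoeff α n k * η (U k j) :=
    hη.map_sum_le (fun k hk => caputoCoeff_nonneg hα0 hα1.le (Finset.mem_range_succ_iff.mp hk))
      (sum_caputoCoeff hα1.ne n) (fun _ _ => Set.mem_univ _)
  rw [hU.eq_convex_combination (by linarith) n j]
  calc _ ≤ μ * η (∑ k ∈ Finset.range (n + 1), caputoCoeff α n k * U k j)
          + (1 - μ) * η (U (n + 1) (j - 1)) :=
        hη.2 (Set.mem_univ _) (Set.mem_univ _) hμ0 (by linarith) (by ring)
    _ ≤ _ := by gcongr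

lemma tsum_entropy_le (hU : SolvesImplicitAdvection α lam U) (hα0 : 0 ≤ α) (hα1 : α < 1)
    (hlam : 0 ≤ lam) {η : ℝ → ℝ} (hη : ConvexOn ℝ Set.univ η) (n : ℕ)
    (hsum : ∀ k ≤ n + 1, Summable fun j => η (U k j)) :
    ∑' j, η (U (n + 1) j)
      ≤ ∑ k ∈ Finset.range (n + 1), caputoCoeff α n k * ∑' j, η (U k j) := by
  have hsum_old : ∀ k ∈ Finset.range (n + 1), Summable fun j => caputoCoeff α n k * η (U k j) :=
    fun k hk => (hsum k (by simp at hk; omega)).mul_left _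
  calc ∑' j, η (U (n + 1) j)
      ≤ ∑' j, ∑ k ∈ Finset.range (n + 1), caputoCoeff α n k * η (U k j) :=
        tsum_le_tsum_of_le_mul_add_shift (by positivity) (hsum (n + 1) le_rfl)
          (summable_sum hsum_old) (hU.entropy_le_convex_combination hα0 hα1 hlam hη n)
    _ = _ := by
        rw [Summable.tsum_finsetSum hsum_old]
        exact Finset.sum_congr rfl fun k _ => tsum_mul_left

end SolvesImplicitAdvection

theorem implicit_advection_entropy_step_general (α τ h a : ℝ)
    (hα : α ∈ Set.Ioo (0 : ℝ) 1) (hτ : 0 < τ) (hh : 0 < h) (ha : 0 < a)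
    (lam : ℝ) (hlam : lam = a * τ ^ α / (h * Real.Gamma (2 - α)))
    (U : ℕ → ℤ → ℝ) (hU : SolvesImplicitAdvection α lam U)
    (η : ℝ → ℝ) (hη : ConvexOn ℝ Set.univ η)
    (n : ℕ) (hsum : ∀ k ≤ n + 1, Summable (fun j : ℤ => η (U k j))) :
    ∑' j : ℤ, η (U (n + 1) j)
      ≤ ∑ k ∈ Finset.range (n + 1), caputoCoeff α n k * ∑' j : ℤ, η (U k j) := by
  have hΓ : 0 < Real.Gamma (2 - α) := Real.Gamma_pos_of_pos (by linarith [hα.2])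
  have hlam0 : 0 ≤ lam := by
    have := Real.rpow_pos_of_pos hτ α
    rw [hlam]
    positivity
  exact hU.tsum_entropy_le hα.1.le hα.2 hlam0 hη n hsum

/-- one-step entropy estimate for the implicit upwind scheme for linear
advection: for convex nonnegative `η`,
`Σ_j η(U^{n+1}_j) ≤ Σ_{k=0}^n c^{n+1}_k Σ_j η(U^k_j)`. -/
theorem implicit_advection_entropy_step (α τ h a : ℝ)
    (hα : α ∈ Set.Ioo (0 : ℝ) 1) (hτ : 0 < τ) (hh : 0 < h) (ha : 0 < a)
    (lam : ℝ) (hlam : lam = a * τ ^ α / (h * Real.Gamma (2 - α)))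
    (U : ℕ → ℤ → ℝ) (hU : SolvesImplicitAdvection α lam U)
    (η : ℝ → ℝ) (hη : ConvexOn ℝ Set.univ η) (hη0 : ∀ x, 0 ≤ η x)
    (n : ℕ) (hsum : ∀ k ≤ n + 1, Summable (fun j : ℤ => η (U k j))) :
    ∑' j : ℤ, η (U (n + 1) j)
      ≤ ∑ k ∈ Finset.range (n + 1), caputoCoeff α n k * ∑' j : ℤ, η (U k j) :=
  implicit_advection_entropy_step_general α τ h a hα hτ hh ha lam hlam U hU η hη n hsum
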